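/- arXiv:2603.03850 — 2 statements merged into one kernel-verified Lean document; each statement's English description precedes it below -/
import Mathlib

section
/- For the Andrecut–Kauffman map, for every (x₀,y₀) in the positive quadrant, the forward orbit eventually enters the rectangle [0, (α₁+c₁)/(1−β₁)] × [0, (α₂+c₂)/(1−β₂)] for any c₁,c₂ > 0; i.e., this rectangle is absorbing: there exists N such that fᵏ(x₀,y₀) lies in the rectangle for all k ≥ N. -/
theorem stmt_2 (α₁ α₂ β₁ β₂ ε : ℝ) (n : ℕ)
    (hα₁ : 0 ≤ α₁) (hα₂ : 0 ≤ α₂)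
    (hβ₁ : 0 ≤ β₁) (hβ₁' : β₁ < 1) (hβ₂ : 0 ≤ β₂) (hβ₂' : β₂ < 1)
    (hε : 0 ≤ ε) (hε' : ε ≤ 1) (hn : 1 ≤ n)
    (c₁ c₂ : ℝ) (hc₁ : 0 < c₁) (hc₂ : 0 < c₂)
    (f : ℝ × ℝ → ℝ × ℝ)
    (hf : ∀ p : ℝ × ℝ, f p =
      (α₁ / (1 + (1 - ε) * p.1 ^ n + ε * p.2 ^ n) + β₁ * p.1,
       α₂ / (1 + ε * p.1 ^ n + (1 - ε) * p.2 ^ n) + β₂ * p.2))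
    (x₀ y₀ : ℝ) (hx₀ : 0 ≤ x₀) (hy₀ : 0 ≤ y₀) :
    ∃ N : ℕ, ∀ k ≥ N, f^[k] (x₀, y₀) ∈
      Set.Icc 0 ((α₁ + c₁) / (1 - β₁)) ×ˢ Set.Icc 0 ((α₂ + c₂) / (1 - β₂)) := by
  have h1 : (0:ℝ) < 1 - β₁ := by linarith
  have h2 : (0:ℝ) < 1 - β₂ := by linarith
  have key : ∀ k : ℕ, 0 ≤ (f^[k] (x₀, y₀)).1 ∧ 0 ≤ (f^[k] (x₀, y₀)).2 ∧
      (f^[k] (x₀, y₀)).1 ≤ β₁ ^ k * x₀ + α₁ / (1 - β₁) ∧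
      (f^[k] (x₀, y₀)).2 ≤ β₂ ^ k * y₀ + α₂ / (1 - β₂) := by
    intro k
    induction k with
    | zero =>
      simp only [Function.iterate_zero, id_eq]
      refine ⟨hx₀, hy₀, ?_, ?_⟩
      · have : 0 ≤ α₁ / (1 - β₁) := div_nonneg hα₁ h1.le
        simp; linarith
      · have : 0 ≤ α₂ / (1 - β₂) := div_nonneg hα₂ h2.le
        simp; linarith
    | succ k ih =>
      obtain ⟨hx, hy, hbx, hby⟩ := ih
      set p := f^[k] (x₀, y₀) with hp
      rw [Function.iterate_succ_apply', hf p]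
      have hpx := pow_nonneg hx n
      have hpy := pow_nonneg hy n
      have hd1 : (1:ℝ) ≤ 1 + (1 - ε) * p.1 ^ n + ε * p.2 ^ n := by
        have := mul_nonneg (by linarith : (0:ℝ) ≤ 1 - ε) hpx
        have := mul_nonneg hε hpy
        linarith
      have hd2 : (1:ℝ) ≤ 1 + ε * p.1 ^ n + (1 - ε) * p.2 ^ n := by
        have := mul_nonneg hε hpx
        have := mul_nonneg (by linarith : (0:ℝ) ≤ 1 - ε) hpy
        linarith
      have hq1 : α₁ / (1 + (1 - ε) * p.1 ^ n + ε * p.2 ^ n) ≤ α₁ :=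
        div_le_self hα₁ hd1
      have hq2 : α₂ / (1 + ε * p.1 ^ n + (1 - ε) * p.2 ^ n) ≤ α₂ :=
        div_le_self hα₂ hd2
      have e1 : α₁ + β₁ * (β₁ ^ k * x₀ + α₁ / (1 - β₁))
          = β₁ ^ (k + 1) * x₀ + α₁ / (1 - β₁) := by
        field_simp; ring
      have e2 : α₂ + β₂ * (β₂ ^ k * y₀ + α₂ / (1 - β₂))
          = β₂ ^ (k + 1) * y₀ + α₂ / (1 - β₂) := by
        field_simp; ring
      refine ⟨?_, ?_, ?_, ?_⟩
      · exact add_nonneg (div_nonneg hα₁ (by linarith)) (mul_nonneg hβ₁ hx)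
      · exact add_nonneg (div_nonneg hα₂ (by linarith)) (mul_nonneg hβ₂ hy)
      · have := mul_le_mul_of_nonneg_left hbx hβ₁
        simp only
        linarith
      · have := mul_le_mul_of_nonneg_left hby hβ₂
        simp only
        linarith
  have hpow : ∀ (β : ℝ) (x c : ℝ), 0 ≤ β → β < 1 → 0 ≤ x → 0 < c →
      ∃ N : ℕ, ∀ k ≥ N, β ^ k * x ≤ c := by
    intro β x c hβ hβ' hx hc
    have ht : 0 < c / (x + 1) := div_pos hc (by linarith)
    obtain ⟨N, hN⟩ := exists_pow_lt_of_lt_one ht hβ'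
    refine ⟨N, fun k hk => ?_⟩
    have hβk : β ^ k ≤ β ^ N := pow_le_pow_of_le_one hβ hβ'.le hk
    have h3 : β ^ k * x ≤ β ^ N * (x + 1) := by
      have := pow_nonneg hβ k
      nlinarith
    have h4 : β ^ N * (x + 1) < c / (x + 1) * (x + 1) := by
      apply mul_lt_mul_of_pos_right hN (by linarith)
    rw [div_mul_cancel₀ c (by linarith : x + 1 ≠ 0)] at h4
    linarith
  obtain ⟨N₁, hN₁⟩ := hpow β₁ x₀ (c₁ / (1 - β₁)) hβ₁ hβ₁' hx₀ (div_pos hc₁ h1)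
  obtain ⟨N₂, hN₂⟩ := hpow β₂ y₀ (c₂ / (1 - β₂)) hβ₂ hβ₂' hy₀ (div_pos hc₂ h2)
  refine ⟨max N₁ N₂, fun k hk => ?_⟩
  obtain ⟨hx, hy, hbx, hby⟩ := key k
  have hk1 := hN₁ k (le_trans (le_max_left _ _) hk)
  have hk2 := hN₂ k (le_trans (le_max_right _ _) hk)
  have e1 : (α₁ + c₁) / (1 - β₁) = α₁ / (1 - β₁) + c₁ / (1 - β₁) := by ring
  have e2 : (α₂ + c₂) / (1 - β₂) = α₂ / (1 - β₂) + c₂ / (1 - β₂) := by ring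
  constructor
  · exact ⟨hx, by rw [e1]; linarith⟩
  · exact ⟨hy, by rw [e2]; linarith⟩
end

section
/- Every bounded invariant set of the Andrecut–Kauffman map restricted to the positive quadrant is contained in [0, α₁/(1−β₁)] × [0, α₂/(1−β₂)]: if S ⊆ [0,∞)² satisfies f(S) = S and S is bounded, then for all (x,y) ∈ S, x ≤ α₁/(1−β₁) and y ≤ α₂/(1−β₂). -/
theorem stmt_3 (α₁ α₂ β₁ β₂ ε : ℝ) (n : ℕ)
    (hα₁ : 0 ≤ α₁) (hα₂ : 0 ≤ α₂)
    (hβ₁ : 0 ≤ β₁) (hβ₁' : β₁ < 1) (hβ₂ : 0 ≤ β₂) (hβ₂' : β₂ < 1)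
    (hε : 0 ≤ ε) (hε' : ε ≤ 1) (hn : 1 ≤ n)
    (f : ℝ × ℝ → ℝ × ℝ)
    (hf : ∀ p : ℝ × ℝ, f p =
      (α₁ / (1 + (1 - ε) * p.1 ^ n + ε * p.2 ^ n) + β₁ * p.1,
       α₂ / (1 + ε * p.1 ^ n + (1 - ε) * p.2 ^ n) + β₂ * p.2))
    (S : Set (ℝ × ℝ)) (hSq : S ⊆ Set.Ici 0 ×ˢ Set.Ici 0)
    (hSinv : f '' S = S) (hSb : Bornology.IsBounded S) :
    ∀ p ∈ S, p.1 ≤ α₁ / (1 - β₁) ∧ p.2 ≤ α₂ / (1 - β₂) := by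
  intro p hp
  have hne1 : (Prod.fst '' S).Nonempty := ⟨p.1, p, hp, rfl⟩
  have hne2 : (Prod.snd '' S).Nonempty := ⟨p.2, p, hp, rfl⟩
  have hbd1 : BddAbove (Prod.fst '' S) := hSb.image_fst.bddAbove
  have hbd2 : BddAbove (Prod.snd '' S) := hSb.image_snd.bddAbove
  set M₁ := sSup (Prod.fst '' S) with hM₁
  set M₂ := sSup (Prod.snd '' S) with hM₂
  -- key pointwise bounds
  have key : ∀ r ∈ S, r.1 ≤ α₁ + β₁ * M₁ ∧ r.2 ≤ α₂ + β₂ * M₂ := by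
    intro r hr
    rw [← hSinv] at hr
    obtain ⟨q, hq, hfq⟩ := hr
    obtain ⟨hq1, hq2⟩ := hSq hq
    have hq1' : (0:ℝ) ≤ q.1 := hq1
    have hq2' : (0:ℝ) ≤ q.2 := hq2
    have ha : (0:ℝ) ≤ (1 - ε) * q.1 ^ n := mul_nonneg (by linarith) (pow_nonneg hq1' n)
    have hb : (0:ℝ) ≤ ε * q.2 ^ n := mul_nonneg hε (pow_nonneg hq2' n)
    have hc : (0:ℝ) ≤ ε * q.1 ^ n := mul_nonneg hε (pow_nonneg hq1' n)
    have hd : (0:ℝ) ≤ (1 - ε) * q.2 ^ n := mul_nonneg (by linarith) (pow_nonneg hq2' n)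
    have hD1 : (1:ℝ) ≤ 1 + (1 - ε) * q.1 ^ n + ε * q.2 ^ n := by linarith
    have hD2 : (1:ℝ) ≤ 1 + ε * q.1 ^ n + (1 - ε) * q.2 ^ n := by linarith
    have hqM1 : q.1 ≤ M₁ := le_csSup hbd1 ⟨q, hq, rfl⟩
    have hqM2 : q.2 ≤ M₂ := le_csSup hbd2 ⟨q, hq, rfl⟩
    have h1 : r.1 = α₁ / (1 + (1 - ε) * q.1 ^ n + ε * q.2 ^ n) + β₁ * q.1 := by
      rw [← hfq, hf]
    have h2 : r.2 = α₂ / (1 + ε * q.1 ^ n + (1 - ε) * q.2 ^ n) + β₂ * q.2 := by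
      rw [← hfq, hf]
    constructor
    · rw [h1]
      have hdiv : α₁ / (1 + (1 - ε) * q.1 ^ n + ε * q.2 ^ n) ≤ α₁ := by
        apply div_le_of_le_mul₀ (by linarith) hα₁
        nlinarith
      have : β₁ * q.1 ≤ β₁ * M₁ := mul_le_mul_of_nonneg_left hqM1 hβ₁
      linarith
    · rw [h2]
      have hdiv : α₂ / (1 + ε * q.1 ^ n + (1 - ε) * q.2 ^ n) ≤ α₂ := by
        apply div_le_of_le_mul₀ (by linarith) hα₂
        nlinarith
      have : β₂ * q.2 ≤ β₂ * M₂ := mul_le_mul_of_nonneg_left hqM2 hβ₂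
      linarith
  have hM1le : M₁ ≤ α₁ + β₁ * M₁ := by
    apply csSup_le hne1
    rintro x ⟨q, hq, rfl⟩
    exact (key q hq).1
  have hM2le : M₂ ≤ α₂ + β₂ * M₂ := by
    apply csSup_le hne2
    rintro y ⟨q, hq, rfl⟩
    exact (key q hq).2
  have hM1 : M₁ ≤ α₁ / (1 - β₁) := by
    rw [le_div_iff₀ (by linarith)]; linarith
  have hM2 : M₂ ≤ α₂ / (1 - β₂) := by
    rw [le_div_iff₀ (by linarith)]; linarith
  exact ⟨le_trans (le_csSup hbd1 ⟨p, hp, rfl⟩) hM1,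
         le_trans (le_csSup hbd2 ⟨p, hp, rfl⟩) hM2⟩
end
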